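/- Let T_t = Σ_{i=0}^n 𝔗_i tⁱ (with 𝔗₀=T) be an order n deformation of a relative Rota-Baxter operator T:V→𝔤 on a Lie-Yamaguti algebra 𝔤 with respect to (V;ρ,μ). If there exists 𝔗_{n+1}:V→𝔤 such that the pair (Ob₁ᵀ, Ob₂ᵀ) defined by Ob₁ᵀ(v₁,v₂)=Σ_{i+j=n+1, i,j≥1}([𝔗ᵢv₁,𝔗ⱼv₂]−𝔗ᵢ(ρ(𝔗ⱼv₁)v₂−ρ(𝔗ⱼv₂)v₁)) and Ob₂ᵀ(v₁,v₂,v₃)=Σ_{i+j+k=n+1, 0≤i,j,k≤n}(⟦𝔗ᵢv₁,𝔗ⱼv₂,𝔗ₖv₃⟧−𝔗ᵢ(D(𝔗ⱼv₁,𝔗ₖv₂)v₃+μ(𝔗ⱼv₂,𝔗ₖv₃)v₁−μ(𝔗ⱼv₁,𝔗ₖv₃)v₂)) equals −δᵀ(𝔗_{n+1}), then T_t + 𝔗_{n+1}t^{n+1} is an order n+1 deformation of T; conversely, if T_t extends to an order n+1 deformation via some 𝔗_{n+1}, then (Ob₁ᵀ, Ob₂ᵀ) = −δᵀ(𝔗_{n+1}).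 -/

import Mathlib

/-!
The deformation equations of order `≤ n` involve only `𝔗₀, …, 𝔗ₙ`, so they hold by hypothesis.
In the equations of order `n + 1`, the terms containing `𝔗_{n+1}` are those with one index
`n + 1` and all others `0`; everything else is the obstruction `Ob^T`. Using the skew-symmetry of
the bracket, of the ternary bracket in its first two arguments and of `D`, the split-off terms
are exactly `δᵀ(𝔗_{n+1})`, so the order `n + 1` equations read `Ob^T + δᵀ(𝔗_{n+1}) = 0`.
-/

open scoped BigOperators

variable (K : Type*) [Field K]

section Defs
variable {g V : Type*} [AddCommGroup g] [Module K g] [AddCommGroup V] [Module K V]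

/-- Bilinearity of a two-argument map. -/
def IsBilin (f : g → g → V) : Prop :=
  (∀ a b c, f (a + b) c = f a c + f b c) ∧
  (∀ (s : K) a c, f (s • a) c = s • f a c) ∧
  (∀ a b c, f a (b + c) = f a b + f a c) ∧
  (∀ (s : K) a b, f a (s • b) = s • f a b)

/-- Trilinearity of a three-argument map. -/
def IsTrilin (f : g → g → g → V) : Prop :=
  (∀ a b c d, f (a + b) c d = f a c d + f b c d) ∧
  (∀ (s : K) a c d, f (s • a) c d = s • f a c d) ∧
  (∀ a b c d, f a (b + c) d = f a b d + f a c d) ∧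
  (∀ (s : K) a b d, f a (s • b) d = s • f a b d) ∧
  (∀ a b c d, f a b (c + d) = f a b c + f a b d) ∧
  (∀ (s : K) a b c, f a b (s • c) = s • f a b c)

/-- Linearity of a map. -/
def IsLin (f : g → V) : Prop :=
  (∀ a b, f (a + b) = f a + f b) ∧ (∀ (s : K) a, f (s • a) = s • f a)

/-- `(g, br, tr)` is a Lie-Yamaguti algebra. -/
def IsLY (br : g → g → g) (tr : g → g → g → g) : Prop :=
  IsBilin K br ∧ IsTrilin K tr ∧
  (∀ x y, br x y = - br y x) ∧
  (∀ x y z, tr x y z = - tr y x z) ∧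
  (∀ x y z, br (br x y) z + br (br y z) x + br (br z x) y
      + tr x y z + tr y z x + tr z x y = 0) ∧
  (∀ x y z w, tr (br x y) z w + tr (br y z) x w + tr (br z x) y w = 0) ∧
  (∀ x y z w, tr x y (br z w) = br (tr x y z) w + br z (tr x y w)) ∧
  (∀ x y z w t, tr x y (tr z w t) =
      tr (tr x y z) w t + tr z (tr x y w) t + tr z w (tr x y t))

/-- The operator `D(x,y) = μ(y,x) − μ(x,y) + [ρ(x),ρ(y)] − ρ([x,y])`. -/
def Dmap (br : g → g → g) (ρ : g → Module.End K V) (μ : g → g → Module.End K V)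
    (x y : g) : Module.End K V :=
  μ y x - μ x y + (ρ x * ρ y - ρ y * ρ x) - ρ (br x y)

/-- `(V; ρ, μ)` is a representation of the Lie-Yamaguti algebra `(g, br, tr)`. -/
def IsRep (br : g → g → g) (tr : g → g → g → g)
    (ρ : g → Module.End K V) (μ : g → g → Module.End K V) : Prop :=
  IsLin K ρ ∧ IsBilin K μ ∧
  (∀ x y z, μ (br x y) z - μ x z * ρ y + μ y z * ρ x = 0) ∧
  (∀ x y z, μ x (br y z) - ρ y * μ x z + ρ z * μ x y = 0) ∧
  (∀ x y z, ρ (tr x y z) = Dmap K br ρ μ x y * ρ z - ρ z * Dmap K br ρ μ x y) ∧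
  (∀ x y z w, μ z w * μ x y - μ y w * μ x z - μ x (tr y z w)
      + Dmap K br ρ μ y z * μ x w = 0) ∧
  (∀ x y z w, μ (tr x y z) w + μ z (tr x y w) =
      Dmap K br ρ μ x y * μ z w - μ z w * Dmap K br ρ μ x y)

/-- `T : V → g` is a relative Rota-Baxter operator. -/
def IsRRB (br : g → g → g) (tr : g → g → g → g)
    (ρ : g → Module.End K V) (μ : g → g → Module.End K V) (T : V →ₗ[K] g) : Prop :=
  (∀ u v, br (T u) (T v) = T (ρ (T u) v - ρ (T v) u)) ∧
  (∀ u v w, tr (T u) (T v) (T w) =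
      T (Dmap K br ρ μ (T u) (T v) w + μ (T v) (T w) u - μ (T u) (T w) v))

end Defs

section Nij
variable {h : Type*} [AddCommGroup h]

/-- `N` is a Nijenhuis operator on the Lie-Yamaguti algebra `(h, br, tr)`. -/
def IsNijenhuis (br : h → h → h) (tr : h → h → h → h) (N : h → h) : Prop :=
  (∀ x y, br (N x) (N y) = N (br (N x) y + br x (N y) - N (br x y))) ∧
  (∀ x y z, tr (N x) (N y) (N z) =
      N (tr (N x) (N y) z + tr (N x) y (N z) + tr x (N y) (N z)
        - N (tr (N x) y z) - N (tr x (N y) z) - N (tr x y (N z))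
        + N (N (tr x y z))))

end Nij

section Stmt19
variable {g V : Type*} [AddCommGroup g] [Module K g] [AddCommGroup V] [Module K V]

/-- `𝔗` (with `𝔗 0 = T`) is an order-`n` deformation of the relative Rota-Baxter
operator `T = 𝔗 0`. -/
def IsOrderDef (br : g → g → g) (tr : g → g → g → g)
    (ρ : g → Module.End K V) (μ : g → g → Module.End K V)
    (n : ℕ) (𝔗 : ℕ → V →ₗ[K] g) : Prop :=
  ∀ s, s ≤ n →
    (∀ u v : V, ∑ p ∈ Finset.HasAntidiagonal.antidiagonal s,
        (br (𝔗 p.1 u) (𝔗 p.2 v) - 𝔗 p.1 (ρ (𝔗 p.2 u) v - ρ (𝔗 p.2 v) u)) = 0) ∧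
    (∀ u v w : V, ∑ i ∈ Finset.range (s + 1), ∑ j ∈ Finset.range (s + 1 - i),
        (tr (𝔗 i u) (𝔗 j v) (𝔗 (s - i - j) w)
          - 𝔗 i (Dmap K br ρ μ (𝔗 j u) (𝔗 (s - i - j) v) w
              + μ (𝔗 j v) (𝔗 (s - i - j) w) u - μ (𝔗 j u) (𝔗 (s - i - j) w) v)) = 0)

/-- The first component of the obstruction `Ob^T`. -/
def ObI (br : g → g → g) (ρ : g → Module.End K V)
    (𝔗 : ℕ → V →ₗ[K] g) (n : ℕ) (u v : V) : g :=
  ∑ p ∈ (Finset.HasAntidiagonal.antidiagonal (n + 1)).filter (fun p => 1 ≤ p.1 ∧ 1 ≤ p.2),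
    (br (𝔗 p.1 u) (𝔗 p.2 v) - 𝔗 p.1 (ρ (𝔗 p.2 u) v - ρ (𝔗 p.2 v) u))

/-- The second component of the obstruction `Ob^T`. -/
def ObII (br : g → g → g) (tr : g → g → g → g)
    (ρ : g → Module.End K V) (μ : g → g → Module.End K V)
    (𝔗 : ℕ → V →ₗ[K] g) (n : ℕ) (u v w : V) : g :=
  ∑ i ∈ Finset.range (n + 2), ∑ j ∈ Finset.range (n + 2 - i),
    if i ≤ n ∧ j ≤ n ∧ n + 1 - i - j ≤ n then
      (tr (𝔗 i u) (𝔗 j v) (𝔗 (n + 1 - i - j) w)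
        - 𝔗 i (Dmap K br ρ μ (𝔗 j u) (𝔗 (n + 1 - i - j) v) w
            + μ (𝔗 j v) (𝔗 (n + 1 - i - j) w) u - μ (𝔗 j u) (𝔗 (n + 1 - i - j) w) v))
    else 0

/-- The first component of the coboundary `δᵀ` of a 1-cochain. -/
def deltaI (br : g → g → g) (ρ : g → Module.End K V)
    (T f : V →ₗ[K] g) (u v : V) : g :=
  br (T u) (f v) - br (T v) (f u) + T (ρ (f v) u - ρ (f u) v)
    - f (ρ (T u) v - ρ (T v) u)

/-- The second component of the coboundary `δᵀ` of a 1-cochain. -/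
def deltaII (br : g → g → g) (tr : g → g → g → g)
    (ρ : g → Module.End K V) (μ : g → g → Module.End K V)
    (T f : V →ₗ[K] g) (u v w : V) : g :=
  tr (T u) (T v) (f w) + tr (f u) (T v) (T w) - tr (f v) (T u) (T w)
    - f (Dmap K br ρ μ (T u) (T v) w + μ (T v) (T w) u - μ (T u) (T w) v)
    - T (Dmap K br ρ μ (f u) (T v) w - Dmap K br ρ μ (f v) (T u) w
        + μ (T v) (f w) u - μ (T u) (f w) v - μ (f u) (T w) v + μ (f v) (T w) u)

section Deformation

open Finset

lemma sum_antidiagonal_succ_eq_sum_filter_add {M : Type*} [AddCommMonoid M] (n : ℕ)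
    (f : ℕ × ℕ → M) :
    ∑ p ∈ antidiagonal (n + 1), f p =
      ∑ p ∈ (antidiagonal (n + 1)).filter (fun p => 1 ≤ p.1 ∧ 1 ≤ p.2), f p
        + (f (0, n + 1) + f (n + 1, 0)) := by
  have hboundary : (antidiagonal (n + 1)).filter (fun p => ¬(1 ≤ p.1 ∧ 1 ≤ p.2))
      = {(0, n + 1), (n + 1, 0)} := by
    ext ⟨a, b⟩
    simp only [mem_filter, HasAntidiagonal.mem_antidiagonal, mem_insert, mem_singleton,
      Prod.mk.injEq]
    omega
  rw [← sum_filter_add_sum_filter_not _ (fun p => 1 ≤ p.1 ∧ 1 ≤ p.2), hboundary,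
    sum_pair (by simp)]

lemma sum_triangle_succ_eq_sum_ite_add {M : Type*} [AddCommMonoid M] (n : ℕ)
    (f : ℕ → ℕ → M) :
    ∑ i ∈ range (n + 2), ∑ j ∈ range (n + 2 - i), f i j =
      (∑ i ∈ range (n + 2), ∑ j ∈ range (n + 2 - i),
        if i ≤ n ∧ j ≤ n ∧ n + 1 - i - j ≤ n then f i j else 0)
        + (f 0 0 + f 0 (n + 1) + f (n + 1) 0) := by
  have hinterior : ∀ i ∈ range n, ∑ j ∈ range (n + 2 - (i + 1)), f (i + 1) j =
      ∑ j ∈ range (n + 2 - (i + 1)),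
        if i + 1 ≤ n ∧ j ≤ n ∧ n + 1 - (i + 1) - j ≤ n then f (i + 1) j else 0 := by
    intro i hi
    refine sum_congr rfl fun j hj => (if_pos ?_).symm
    simp only [mem_range] at hi hj
    omega
  have hfirst : ∑ j ∈ range (n + 2 - 0), f 0 j =
      (∑ j ∈ range (n + 2 - 0), if 0 ≤ n ∧ j ≤ n ∧ n + 1 - 0 - j ≤ n then f 0 j else 0)
        + (f 0 0 + f 0 (n + 1)) := by
    have hmiddle : ∀ j ∈ range n,
        f 0 (j + 1) = if 0 ≤ n ∧ j + 1 ≤ n ∧ n + 1 - 0 - (j + 1) ≤ n then f 0 (j + 1) else 0 :=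
      fun j hj => (if_pos (by simp only [mem_range] at hj; omega)).symm
    rw [Nat.sub_zero, sum_range_succ, sum_range_succ', sum_range_succ _ (n + 1),
      sum_range_succ' _ n, if_neg (by omega), if_neg (by omega), sum_congr rfl hmiddle]
    abel
  rw [sum_range_succ, sum_range_succ', sum_range_succ _ (n + 1), sum_range_succ' _ n,
    sum_congr rfl hinterior, hfirst, show n + 2 - (n + 1) = 1 by omega, sum_range_one,
    sum_range_one, if_neg (by omega)]
  abel

/-- Coefficient of `tˢ` in `[T_t u, T_t v] − T_t(ρ(T_t u)v − ρ(T_t v)u)` for `T_t = ∑ 𝔗ᵢ tⁱ`. -/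
def deformI (br : g → g → g) (ρ : g → Module.End K V) (𝔗 : ℕ → V →ₗ[K] g) (s : ℕ)
    (u v : V) : g :=
  ∑ p ∈ antidiagonal s, (br (𝔗 p.1 u) (𝔗 p.2 v) - 𝔗 p.1 (ρ (𝔗 p.2 u) v - ρ (𝔗 p.2 v) u))

/-- Coefficient of `tˢ` in the ternary deformation equation for `T_t = ∑ 𝔗ᵢ tⁱ`. -/
def deformII (br : g → g → g) (tr : g → g → g → g)
    (ρ : g → Module.End K V) (μ : g → g → Module.End K V) (𝔗 : ℕ → V →ₗ[K] g) (s : ℕ)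
    (u v w : V) : g :=
  ∑ i ∈ range (s + 1), ∑ j ∈ range (s + 1 - i),
    (tr (𝔗 i u) (𝔗 j v) (𝔗 (s - i - j) w)
      - 𝔗 i (Dmap K br ρ μ (𝔗 j u) (𝔗 (s - i - j) v) w
          + μ (𝔗 j v) (𝔗 (s - i - j) w) u - μ (𝔗 j u) (𝔗 (s - i - j) w) v))

variable {br : g → g → g} {tr : g → g → g → g}
  {ρ : g → Module.End K V} {μ : g → g → Module.End K V} {𝔗 𝔗' : ℕ → V →ₗ[K] g} {n : ℕ}

lemma isOrderDef_succ_iff :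
    IsOrderDef K br tr ρ μ (n + 1) 𝔗 ↔ IsOrderDef K br tr ρ μ n 𝔗 ∧
      (∀ u v, deformI K br ρ 𝔗 (n + 1) u v = 0) ∧
      (∀ u v w, deformII K br tr ρ μ 𝔗 (n + 1) u v w = 0) := by
  constructor
  · intro h
    exact ⟨fun s hs => h s (Nat.le_succ_of_le hs), h (n + 1) le_rfl⟩
  · rintro ⟨h, htop⟩ s hs
    rcases Nat.le_succ_iff.1 hs with hs | rfl
    exacts [h s hs, htop]

lemma deformI_congr {s : ℕ} (h : ∀ i ≤ s, 𝔗 i = 𝔗' i) :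
    deformI K br ρ 𝔗 s = deformI K br ρ 𝔗' s := by
  ext u v
  refine sum_congr rfl fun p hp => ?_
  rw [HasAntidiagonal.mem_antidiagonal] at hp
  rw [h p.1 (by omega), h p.2 (by omega)]

lemma deformII_congr {s : ℕ} (h : ∀ i ≤ s, 𝔗 i = 𝔗' i) :
    deformII K br tr ρ μ 𝔗 s = deformII K br tr ρ μ 𝔗' s := by
  ext u v w
  refine sum_congr rfl fun i hi => sum_congr rfl fun j hj => ?_
  rw [mem_range] at hi hj
  rw [h i (by omega), h j (by omega), h (s - i - j) (by omega)]

lemma isOrderDef_congr (h : ∀ i ≤ n, 𝔗 i = 𝔗' i) :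
    IsOrderDef K br tr ρ μ n 𝔗 ↔ IsOrderDef K br tr ρ μ n 𝔗' := by
  refine forall₂_congr fun s hs => ?_
  have hs : ∀ i ≤ s, 𝔗 i = 𝔗' i := fun i hi => h i (hi.trans hs)
  change ((∀ u v, deformI K br ρ 𝔗 s u v = 0) ∧ ∀ u v w, deformII K br tr ρ μ 𝔗 s u v w = 0) ↔
    (∀ u v, deformI K br ρ 𝔗' s u v = 0) ∧ ∀ u v w, deformII K br tr ρ μ 𝔗' s u v w = 0
  rw [deformI_congr K hs, deformII_congr K hs]

lemma ObI_congr (h : ∀ i ≤ n, 𝔗 i = 𝔗' i) : ObI K br ρ 𝔗 n = ObI K br ρ 𝔗' n := by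
  ext u v
  refine sum_congr rfl fun p hp => ?_
  rw [mem_filter, HasAntidiagonal.mem_antidiagonal] at hp
  rw [h p.1 (by omega), h p.2 (by omega)]

lemma ObII_congr (h : ∀ i ≤ n, 𝔗 i = 𝔗' i) :
    ObII K br tr ρ μ 𝔗 n = ObII K br tr ρ μ 𝔗' n := by
  ext u v w
  refine sum_congr rfl fun i _ => sum_congr rfl fun j _ => ?_
  split_ifs with hij
  · rw [h i hij.1, h j hij.2.1, h _ hij.2.2]
  · rfl

lemma Dmap_skew (hbr : ∀ x y, br x y = -br y x) (hρ : IsLin K ρ) (x y : g) :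
    Dmap K br ρ μ x y = -Dmap K br ρ μ y x := by
  have hρneg : ρ (br y x) = -ρ (br x y) := by
    rw [hbr y x, ← neg_one_smul K (br x y), hρ.2, neg_one_smul]
  rw [Dmap, Dmap, hρneg]
  abel

lemma deformI_succ (hbr : ∀ x y, br x y = -br y x) (u v : V) :
    deformI K br ρ 𝔗 (n + 1) u v = ObI K br ρ 𝔗 n u v + deltaI K br ρ (𝔗 0) (𝔗 (n + 1)) u v := by
  rw [deformI, sum_antidiagonal_succ_eq_sum_filter_add, ObI, deltaI, hbr (𝔗 (n + 1) u)]
  simp only [map_sub]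
  abel

lemma deformII_succ (htr : ∀ x y z, tr x y z = -tr y x z)
    (hD : ∀ x y, Dmap K br ρ μ x y = -Dmap K br ρ μ y x) (u v w : V) :
    deformII K br tr ρ μ 𝔗 (n + 1) u v w =
      ObII K br tr ρ μ 𝔗 n u v w + deltaII K br tr ρ μ (𝔗 0) (𝔗 (n + 1)) u v w := by
  rw [deformII, sum_triangle_succ_eq_sum_ite_add, ObII, deltaII, htr (𝔗 0 u) (𝔗 (n + 1) v),
    hD (𝔗 (n + 1) v) (𝔗 0 u)]
  simp only [Nat.sub_zero, Nat.sub_self, LinearMap.neg_apply, map_add, map_sub, map_neg]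
  abel

end Deformation

theorem stmt19 (br : g → g → g) (tr : g → g → g → g)
    (ρ : g → Module.End K V) (μ : g → g → Module.End K V)
    (hLY : IsLY K br tr) (hrep : IsRep K br tr ρ μ)
    (T : V →ₗ[K] g)
    (n : ℕ) (𝔗 : ℕ → V →ₗ[K] g) (h0 : 𝔗 0 = T)
    (hdef : IsOrderDef K br tr ρ μ n 𝔗)
    (X : V →ₗ[K] g) :
    ((∀ u v : V, ObI K br ρ 𝔗 n u v = - deltaI K br ρ T X u v) ∧
     (∀ u v w : V, ObII K br tr ρ μ 𝔗 n u v w = - deltaII K br tr ρ μ T X u v w)) ↔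
    IsOrderDef K br tr ρ μ (n + 1) (fun i => if i = n + 1 then X else 𝔗 i) := by
  set 𝔗' : ℕ → V →ₗ[K] g := fun i => if i = n + 1 then X else 𝔗 i
  have hlow : ∀ i ≤ n, 𝔗' i = 𝔗 i := fun i hi => if_neg (by omega)
  have hzero : 𝔗' 0 = T := (hlow 0 n.zero_le).trans h0
  have htop : 𝔗' (n + 1) = X := if_pos rfl
  have hD := Dmap_skew K (μ := μ) hLY.2.2.1 hrep.1
  simp only [isOrderDef_succ_iff, isOrderDef_congr K hlow, hdef, true_and,
    deformI_succ K hLY.2.2.1, deformII_succ K hLY.2.2.2.1 hD, ObI_congr K hlow,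
    ObII_congr K hlow, hzero, htop, add_eq_zero_iff_eq_neg]

end Stmt19
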